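/- There is no finite constant C > 0 such that ‖T(f₁,f₂)‖_∞ ≤ C ‖f₁‖_∞ ‖f₂‖_2 holds for all nonnegative measurable functions f₁, f₂ on ℝ; that is, in dimension n = 2 the bilinear spherical average T fails to be of strong type at the point E = (0, 1/2; 0). -/

import Mathlib

open MeasureTheory ENNReal

/-- The `L^p` "norm" (with respect to Lebesgue measure on `ℝ`) of an
`ℝ≥0∞`-valued function, with the convention for `p = ∞`. -/
noncomputable def lpNorm (p : ℝ≥0∞) (g : ℝ → ℝ≥0∞) : ℝ≥0∞ :=
  if p = ∞ then essSup g (volume : Measure ℝ)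
  else (∫⁻ x, g x ^ p.toReal) ^ (1 / p.toReal)

/-- The bilinear spherical average in dimension `n = 2`:
`T(f₁,f₂)(x) = (1/(2π)) ∫₀^{2π} f₁(x − cos t) f₂(x − sin t) dt`. -/
noncomputable def T2 (f₁ f₂ : ℝ → ℝ) (x : ℝ) : ℝ≥0∞ :=
  (ENNReal.ofReal (2 * Real.pi))⁻¹ *
    ∫⁻ t in Set.Ioc 0 (2 * Real.pi),
      ENNReal.ofReal (f₁ (x - Real.cos t)) * ENNReal.ofReal (f₂ (x - Real.sin t))

/-!
Test the inequality on `f₁ = 1` and `f₂(y) = y^{-1/2}` on `(δ, 1/2]`, with `δ = ε²`. Then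
`‖f₂‖₂² = log (1/(2δ))`. For `x ∈ (1, 1 + δ)` and `h = π/2 - t ∈ (3ε, 1/2]`, the point
`x - sin t = x - cos h` lies in `(δ, h²)` because `1 - cos h ≍ h²`, so `f₂(x - sin t) ≥ 1/h` and
`T(f₁, f₂)(x) ≥ log (1/(6ε)) / (2π)` on a set of positive measure. As `ε → 0` the left side grows
like `log (1/ε)` while `C ‖f₁‖_∞ ‖f₂‖₂` grows only like `√(log (1/ε))`.
-/

lemma le_essSup_of_forall_mem_le {α β : Type*} [MeasurableSpace α] [CompleteLattice β]
    {μ : Measure α} {s : Set α} (hs : MeasurableSet s) (hμs : μ s ≠ 0) {f : α → β} {c : β}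
    (h : ∀ x ∈ s, c ≤ f x) : c ≤ essSup f μ := by
  have : NeZero (μ.restrict s) := ⟨by simpa [Measure.restrict_eq_zero] using hμs⟩
  calc c = essSup (fun _ => c) (μ.restrict s) := (essSup_const' c).symm
    _ ≤ essSup f (μ.restrict s) :=
        essSup_mono_ae (by filter_upwards [ae_restrict_mem hs] with x hx using h x hx)
    _ ≤ essSup f μ := essSup_mono_measure' Measure.restrict_le_self

lemma lpNorm_top_one : lpNorm ∞ (fun _ => 1) = 1 := by
  rw [_root_.lpNorm, if_pos rfl, essSup_const']

lemma lintegral_Ioc_ofReal_eq_ofReal_intervalIntegral {a b : ℝ} (hab : a ≤ b) {g : ℝ → ℝ}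
    (hg : IntervalIntegrable g volume a b) (hg0 : ∀ x ∈ Set.Ioc a b, 0 ≤ g x) :
    ∫⁻ x in Set.Ioc a b, ENNReal.ofReal (g x) = ENNReal.ofReal (∫ x in a..b, g x) := by
  rw [intervalIntegral.integral_of_le hab, ofReal_integral_eq_lintegral_ofReal
    ((intervalIntegrable_iff_integrableOn_Ioc_of_le hab).mp hg)]
  filter_upwards [ae_restrict_mem measurableSet_Ioc] with x hx using hg0 x hx

lemma lintegral_Ioc_ofReal_inv {a b : ℝ} (ha : 0 < a) (hab : a ≤ b) :
    ∫⁻ x in Set.Ioc a b, ENNReal.ofReal x⁻¹ = ENNReal.ofReal (Real.log (b / a)) := by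
  rw [lintegral_Ioc_ofReal_eq_ofReal_intervalIntegral hab,
    integral_inv_of_pos ha (ha.trans_le hab)]
  · exact intervalIntegral.intervalIntegrable_inv
      (fun x hx => (ha.trans_le (Set.uIcc_of_le hab ▸ hx).1).ne') continuousOn_id
  · exact fun x hx => inv_nonneg.mpr (ha.trans hx.1).le

noncomputable def truncInvSqrt (δ : ℝ) : ℝ → ℝ :=
  (Set.Ioc δ (1 / 2)).indicator fun y => (√y)⁻¹

@[fun_prop]
lemma measurable_truncInvSqrt (δ : ℝ) : Measurable (truncInvSqrt δ) :=
  (Real.continuous_sqrt.measurable.inv).indicator measurableSet_Ioc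

lemma truncInvSqrt_nonneg (δ x : ℝ) : 0 ≤ truncInvSqrt δ x :=
  Set.indicator_nonneg (fun _ _ => by positivity) x

lemma ofReal_truncInvSqrt_sq {δ : ℝ} (hδ : 0 < δ) (x : ℝ) :
    ENNReal.ofReal (truncInvSqrt δ x) ^ (2 : ℝ) =
      (Set.Ioc δ (1 / 2)).indicator (fun y => ENNReal.ofReal y⁻¹) x := by
  by_cases hx : x ∈ Set.Ioc δ (1 / 2)
  · rw [truncInvSqrt, Set.indicator_of_mem hx, Set.indicator_of_mem hx,
      ENNReal.ofReal_rpow_of_nonneg (by positivity) zero_le_two, Real.rpow_two, inv_pow,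
      Real.sq_sqrt (hδ.trans hx.1).le]
  · rw [truncInvSqrt, Set.indicator_of_notMem hx, Set.indicator_of_notMem hx,
      ENNReal.ofReal_zero, ENNReal.zero_rpow_of_pos two_pos]

lemma lpNorm_two_truncInvSqrt {δ : ℝ} (hδ : 0 < δ) (hδ2 : δ ≤ 1 / 2) :
    lpNorm 2 (fun x => ENNReal.ofReal (truncInvSqrt δ x)) =
      ENNReal.ofReal √(Real.log (1 / (2 * δ))) := by
  have hlog : 0 ≤ Real.log (1 / (2 * δ)) :=
    Real.log_nonneg (by rw [le_div_iff₀ (by positivity)]; linarith)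
  rw [_root_.lpNorm, if_neg ofNat_ne_top, toReal_ofNat]
  simp_rw [ofReal_truncInvSqrt_sq hδ]
  rw [lintegral_indicator measurableSet_Ioc, lintegral_Ioc_ofReal_inv hδ hδ2, div_div,
    ENNReal.ofReal_rpow_of_nonneg hlog (by norm_num), Real.sqrt_eq_rpow]

lemma sq_div_five_le_one_sub_cos {h : ℝ} (hh : |h| ≤ Real.pi) :
    h ^ 2 / 5 ≤ 1 - Real.cos h := by
  have hcos := Real.cos_le_one_sub_mul_cos_sq hh
  have hπ : Real.pi ^ 2 ≤ 10 := by nlinarith [Real.pi_pos, Real.pi_lt_d2]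
  have : 1 / 5 ≤ 2 / Real.pi ^ 2 := by
    rw [div_le_div_iff₀ (by norm_num) (by positivity)]; linarith
  nlinarith [sq_nonneg h]

lemma inv_le_truncInvSqrt_sub_cos {ε h x : ℝ} (hε : 0 < ε) (hεh : 3 * ε ≤ h) (hh : h ≤ 1 / 2)
    (hx : x ∈ Set.Ioo 1 (1 + ε ^ 2)) : h⁻¹ ≤ truncInvSqrt (ε ^ 2) (x - Real.cos h) := by
  have hh0 : 0 < h := by linarith
  have hlow := sq_div_five_le_one_sub_cos (h := h)
    (by rw [abs_of_pos hh0]; linarith [Real.pi_gt_three])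
  have hup : 1 - Real.cos h ≤ h ^ 2 / 2 := by linarith [Real.one_sub_sq_div_two_le_cos (x := h)]
  have h9 : 9 * ε ^ 2 ≤ h ^ 2 := by nlinarith
  have hlt : x - Real.cos h < h ^ 2 := by linarith [hx.2]
  have hmem : x - Real.cos h ∈ Set.Ioc (ε ^ 2) (1 / 2) :=
    ⟨by linarith [hx.1], by nlinarith⟩
  rw [truncInvSqrt, Set.indicator_of_mem hmem]
  refine inv_anti₀ (Real.sqrt_pos.mpr ((sq_pos_of_pos hε).trans hmem.1)) ?_
  calc √(x - Real.cos h) ≤ √(h ^ 2) := Real.sqrt_le_sqrt hlt.le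
    _ = h := Real.sqrt_sq hh0.le

lemma ofReal_log_le_lintegral_truncInvSqrt_sub_sin {ε x : ℝ} (hε : 0 < ε) (hε6 : ε < 1 / 6)
    (hx : x ∈ Set.Ioo 1 (1 + ε ^ 2)) :
    ENNReal.ofReal (Real.log (1 / (6 * ε))) ≤
      ∫⁻ t in Set.Ioc 0 (2 * Real.pi), ENNReal.ofReal (truncInvSqrt (ε ^ 2) (x - Real.sin t)) := by
  set s := (fun t => Real.pi / 2 - t) ⁻¹' Set.Ioc (3 * ε) (1 / 2)
  have hs : s ⊆ Set.Ioc 0 (2 * Real.pi) := fun t ht => by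
    simp only [s, Set.mem_preimage, Set.mem_Ioc] at ht
    constructor <;> linarith [Real.pi_gt_three]
  calc ENNReal.ofReal (Real.log (1 / (6 * ε)))
      = ∫⁻ h in Set.Ioc (3 * ε) (1 / 2), ENNReal.ofReal h⁻¹ := by
        rw [lintegral_Ioc_ofReal_inv (by positivity) (by linarith)]
        congr 2
        field_simp
        norm_num
    _ = ∫⁻ t in s, ENNReal.ofReal (Real.pi / 2 - t)⁻¹ :=
        ((volume.measurePreserving_sub_left _).setLIntegral_comp_preimage measurableSet_Ioc
          (by fun_prop)).symm
    _ ≤ ∫⁻ t in s, ENNReal.ofReal (truncInvSqrt (ε ^ 2) (x - Real.sin t)) :=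
        setLIntegral_mono (by fun_prop) fun t ht => by
          rw [← Real.cos_pi_div_two_sub]
          exact ENNReal.ofReal_le_ofReal (inv_le_truncInvSqrt_sub_cos hε ht.1.le ht.2 hx)
    _ ≤ _ := lintegral_mono_set hs

lemma ofReal_log_div_le_lpNorm_top_T2 {ε : ℝ} (hε : 0 < ε) (hε6 : ε < 1 / 6) :
    ENNReal.ofReal (Real.log (1 / (6 * ε))) / ENNReal.ofReal (2 * Real.pi) ≤
      lpNorm ∞ (T2 (fun _ => 1) (truncInvSqrt (ε ^ 2))) := by
  rw [_root_.lpNorm, if_pos rfl]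
  refine le_essSup_of_forall_mem_le (s := Set.Ioo 1 (1 + ε ^ 2)) measurableSet_Ioo
    (by simp [hε.ne']) fun x hx => ?_
  rw [ENNReal.div_eq_inv_mul, T2]
  refine mul_le_mul_right ?_ _
  simpa only [ENNReal.ofReal_one, one_mul] using
    ofReal_log_le_lintegral_truncInvSqrt_sub_sin hε hε6 hx

lemma exists_mul_sqrt_log_lt_log {C : ℝ} (hC : 0 ≤ C) :
    ∃ ε : ℝ, 0 < ε ∧ ε < 1 / 6 ∧
      C * √(Real.log (1 / (2 * ε ^ 2))) * (2 * Real.pi) < Real.log (1 / (6 * ε)) := by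
  set s := 4 * Real.pi * C + 3
  have hs : 3 ≤ s := by have := Real.pi_pos; nlinarith
  have hlog6 : Real.log 6 < 9 := by
    linarith [Real.log_le_sub_one_of_pos (show (0 : ℝ) < 6 by norm_num)]
  have hlog2 : 0 ≤ Real.log 2 := Real.log_nonneg one_le_two
  refine ⟨Real.exp (-s ^ 2), Real.exp_pos _, ?_, ?_⟩
  · rw [← Real.exp_log (show (0 : ℝ) < 1 / 6 by norm_num), Real.exp_lt_exp, one_div,
      Real.log_inv]
    nlinarith
  · have hM : Real.log (1 / (6 * Real.exp (-s ^ 2))) = s ^ 2 - Real.log 6 := by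
      rw [one_div, Real.log_inv, Real.log_mul (by norm_num) (Real.exp_pos _).ne', Real.log_exp]
      ring
    have hL : Real.log (1 / (2 * Real.exp (-s ^ 2) ^ 2)) = 2 * s ^ 2 - Real.log 2 := by
      rw [one_div, Real.log_inv, Real.log_mul (by norm_num) (by positivity), Real.log_pow,
        Real.log_exp]
      push_cast
      ring
    have hsqrt : √(2 * s ^ 2 - Real.log 2) ≤ 2 * s :=
      Real.sqrt_le_iff.mpr ⟨by linarith, by nlinarith⟩
    rw [hM, hL]
    calc C * √(2 * s ^ 2 - Real.log 2) * (2 * Real.pi)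
        ≤ C * (2 * s) * (2 * Real.pi) := by gcongr
      _ = (s - 3) * s := by ring
      _ < s ^ 2 - Real.log 6 := by nlinarith

theorem not_strong_type_at_E :
    ¬ ∃ C : ℝ, 0 < C ∧ ∀ f₁ f₂ : ℝ → ℝ, Measurable f₁ → Measurable f₂ →
      (∀ x, 0 ≤ f₁ x) → (∀ x, 0 ≤ f₂ x) →
      lpNorm ∞ (T2 f₁ f₂) ≤ ENNReal.ofReal C *
        lpNorm ∞ (fun x => ENNReal.ofReal (f₁ x)) *
        lpNorm 2 (fun x => ENNReal.ofReal (f₂ x)) := by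
  rintro ⟨C, hC, H⟩
  obtain ⟨ε, hε, hε6, hlt⟩ := exists_mul_sqrt_log_lt_log hC.le
  have hbound := (ofReal_log_div_le_lpNorm_top_T2 hε hε6).trans
    (H _ _ measurable_const (measurable_truncInvSqrt _) (fun _ => zero_le_one)
      (truncInvSqrt_nonneg _))
  simp only [ENNReal.ofReal_one, lpNorm_top_one, mul_one,
    lpNorm_two_truncInvSqrt (pow_pos hε 2) (by nlinarith)] at hbound
  rw [ENNReal.div_le_iff (by simp [Real.pi_pos]) ofReal_ne_top, ← ENNReal.ofReal_mul hC.le,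
    ← ENNReal.ofReal_mul (by positivity), ENNReal.ofReal_le_ofReal_iff (by positivity)] at hbound
  linarith
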